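/- arXiv:quant-ph/0310075 — 5 statements merged into one kernel-verified Lean document; each statement's English description precedes it below -/
import Mathlib

section
/- (Benedetto–Fickus bound) For any set of n unit vectors ψ_1,...,ψ_n in ℂ^d with frame operator S = Σ_k |ψ_k⟩⟨ψ_k|, one has Tr[S²] ≥ max(n, n²/d). -/
open Matrix BigOperators Finset

noncomputable def outer {d : ℕ} (v : Fin d → ℂ) : Matrix (Fin d) (Fin d) ℂ :=
  Matrix.vecMulVec v (star v)

lemma star_dot {d : ℕ} (v w : Fin d → ℂ) :
    star w ⬝ᵥ v = starRingEnd ℂ (star v ⬝ᵥ w) := by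
  simp [dotProduct, map_sum, mul_comm]

lemma trace_outer_mul_outer {d : ℕ} (v w : Fin d → ℂ) :
    ((outer v * outer w).trace) = (star v ⬝ᵥ w) * (star w ⬝ᵥ v) := by
  simp only [outer, Matrix.trace, Matrix.diag, Matrix.mul_apply, Matrix.vecMulVec_apply,
    dotProduct, Pi.star_apply, Finset.mul_sum, Finset.sum_mul]
  exact Finset.sum_congr rfl fun i _ => Finset.sum_congr rfl fun j _ => by ring

/-- Benedetto–Fickus bound: for n unit vectors in ℂ^d with frame
operator S, Tr[S²] ≥ max(n, n²/d). -/
theorem benedetto_fickus_bound (d n : ℕ) (hd : 0 < d) (ψ : Fin n → Fin d → ℂ)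
    (hunit : ∀ k, star (ψ k) ⬝ᵥ ψ k = 1) :
    max (n : ℝ) ((n : ℝ)^2 / d)
      ≤ (((∑ k, outer (ψ k)) * (∑ k, outer (ψ k))).trace).re := by
  set S : Matrix (Fin d) (Fin d) ℂ := ∑ k, outer (ψ k) with hS
  have hSapp : ∀ i j, S i j = ∑ k, ψ k i * star (ψ k j) := by
    intro i j
    simp [hS, Matrix.sum_apply, outer, Matrix.vecMulVec_apply]
  -- expansion 1: Gram
  have hexp1 : ((S * S).trace).re = ∑ k, ∑ l, Complex.normSq (star (ψ k) ⬝ᵥ ψ l) := by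
    rw [hS, Finset.sum_mul_sum, Matrix.trace_sum]
    simp only [Matrix.trace_sum, trace_outer_mul_outer]
    rw [Complex.re_sum]
    refine Finset.sum_congr rfl fun k _ => ?_
    rw [Complex.re_sum]
    refine Finset.sum_congr rfl fun l _ => ?_
    rw [star_dot (ψ k) (ψ l), Complex.mul_conj]
    simp
  -- expansion 2: entries
  have hexp2 : ((S * S).trace).re = ∑ i, ∑ j, Complex.normSq (S i j) := by
    have hherm : ∀ i j, S j i = starRingEnd ℂ (S i j) := by
      intro i j
      rw [hSapp, hSapp, map_sum]
      refine Finset.sum_congr rfl fun k _ => ?_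
      simp [mul_comm]
    simp only [Matrix.trace, Matrix.diag, Matrix.mul_apply]
    rw [Complex.re_sum]
    refine Finset.sum_congr rfl fun i _ => ?_
    rw [Complex.re_sum]
    refine Finset.sum_congr rfl fun j _ => ?_
    rw [hherm i j, Complex.mul_conj]
    simp
  -- trace S = n
  have htr : ∑ i, (S i i).re = (n : ℝ) := by
    have h : ∑ i, S i i = (n : ℂ) := by
      simp only [hSapp]
      rw [Finset.sum_comm]
      have h2 : ∀ k : Fin n, ∑ i, ψ k i * starRingEnd ℂ (ψ k i) = 1 := by
        intro k
        simpa [dotProduct, mul_comm] using hunit k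
      simp [h2]
    calc ∑ i, (S i i).re = (∑ i, S i i).re := by rw [Complex.re_sum]
      _ = (n : ℝ) := by rw [h]; simp
  rw [max_le_iff]
  constructor
  · -- n bound
    rw [hexp1]
    calc (n : ℝ) = ∑ k : Fin n, (1 : ℝ) := by simp
      _ ≤ ∑ k, ∑ l, Complex.normSq (star (ψ k) ⬝ᵥ ψ l) := by
          refine Finset.sum_le_sum fun k _ => ?_
          have h1 : Complex.normSq (star (ψ k) ⬝ᵥ ψ k) = 1 := by rw [hunit k]; simp
          calc (1 : ℝ) = Complex.normSq (star (ψ k) ⬝ᵥ ψ k) := h1.symm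
            _ ≤ ∑ l, Complex.normSq (star (ψ k) ⬝ᵥ ψ l) :=
              Finset.single_le_sum (f := fun l => Complex.normSq (star (ψ k) ⬝ᵥ ψ l))
                (fun l _ => Complex.normSq_nonneg _) (Finset.mem_univ k)
  · -- n²/d bound
    rw [hexp2]
    have step1 : ∑ i, ((S i i).re) ^ 2 ≤ ∑ i, ∑ j, Complex.normSq (S i j) := by
      refine Finset.sum_le_sum fun i _ => ?_
      calc ((S i i).re) ^ 2 ≤ Complex.normSq (S i i) := by
            rw [Complex.normSq_apply]; nlinarith [sq_nonneg (S i i).im]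
        _ ≤ ∑ j, Complex.normSq (S i j) :=
            Finset.single_le_sum (f := fun j => Complex.normSq (S i j))
              (fun j _ => Complex.normSq_nonneg _) (Finset.mem_univ i)
    have step2 : (n : ℝ) ^ 2 ≤ (d : ℝ) * ∑ i, ((S i i).re) ^ 2 := by
      rw [← htr]
      have := sq_sum_le_card_mul_sum_sq (s := (Finset.univ : Finset (Fin d)))
        (f := fun i => (S i i).re)
      simpa using this
    rw [div_le_iff₀ (by exact_mod_cast hd)]
    calc (n:ℝ)^2 ≤ (d : ℝ) * ∑ i, ((S i i).re) ^ 2 := step2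
      _ ≤ (d : ℝ) * ∑ i, ∑ j, Complex.normSq (S i j) :=
          mul_le_mul_of_nonneg_left step1 (by positivity)
      _ = (∑ i, ∑ j, Complex.normSq (S i j)) * d := by ring
end

section
/- If n unit vectors ψ_1,...,ψ_n in ℂ^d with n ≥ d satisfy Tr[S²] = n²/d for the frame operator S = Σ_k |ψ_k⟩⟨ψ_k|, then S = (n/d)·I, i.e., the vectors form a tight frame. -/
open Matrix BigOperators Finset

lemma outer_conjTranspose {d : ℕ} (v : Fin d → ℂ) : (outer v)ᴴ = outer v := by
  ext i j
  simp [outer, Matrix.vecMulVec_apply, Matrix.conjTranspose_apply, mul_comm]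

lemma outer_trace {d : ℕ} (v : Fin d → ℂ) : (outer v).trace = star v ⬝ᵥ v := by
  simp [outer, Matrix.trace, Matrix.diag, Matrix.vecMulVec_apply, dotProduct, mul_comm]

open scoped ComplexOrder in
lemma eq_zero_of_trace_conjTranspose_mul_self {m : Type*} [Fintype m] [DecidableEq m]
    (T : Matrix m m ℂ) (h : (Tᴴ * T).trace = 0) : T = 0 := by
  have hsum : ∑ j, dotProduct (star fun i => T i j) (fun i => T i j) = 0 := by
    simpa [Matrix.trace, Matrix.mul_apply, Matrix.diag, dotProduct,
      Matrix.conjTranspose_apply] using h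
  have hterm := (Finset.sum_eq_zero_iff_of_nonneg
    (fun j _ => Finset.sum_nonneg fun i _ => star_mul_self_nonneg (T i j))).mp hsum
  ext i j
  have := (dotProduct_star_self_eq_zero).mp (hterm j (Finset.mem_univ j))
  simpa using congrFun this i

/-- if n ≥ d unit vectors in ℂ^d satisfy Tr[S²] = n²/d for the frame
operator S, then S = (n/d)·I (a tight frame). -/
theorem tight_frame_of_min_frame_potential (d n : ℕ) (hd : 0 < d) (hnd : d ≤ n)
    (ψ : Fin n → Fin d → ℂ)
    (hunit : ∀ k, star (ψ k) ⬝ᵥ ψ k = 1)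
    (hpot : (((∑ k, outer (ψ k)) * (∑ k, outer (ψ k))).trace : ℂ)
      = (((n : ℝ)^2 / d : ℝ) : ℂ)) :
    (∑ k, outer (ψ k)) = (((n : ℝ) / d : ℝ) : ℂ) • (1 : Matrix (Fin d) (Fin d) ℂ) := by
  set S : Matrix (Fin d) (Fin d) ℂ := ∑ k, outer (ψ k) with hS
  set c : ℂ := (((n : ℝ) / d : ℝ) : ℂ) with hc
  have hSH : Sᴴ = S := by
    rw [hS, Matrix.conjTranspose_sum]
    exact Finset.sum_congr rfl fun k _ => outer_conjTranspose _
  have htrS : S.trace = (n : ℂ) := by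
    rw [hS, Matrix.trace_sum]
    simp [outer_trace, hunit]
  set T : Matrix (Fin d) (Fin d) ℂ := S - c • 1 with hT
  have hTH : Tᴴ = T := by
    rw [hT, Matrix.conjTranspose_sub, hSH, Matrix.conjTranspose_smul,
      Matrix.conjTranspose_one]
    congr 1
    rw [hc]
    simp
  have htrT : (Tᴴ * T).trace = 0 := by
    rw [hTH, hT, Matrix.sub_mul, Matrix.mul_sub, Matrix.mul_sub, Matrix.smul_mul,
      Matrix.mul_smul, Matrix.one_mul, Matrix.mul_one]
    simp only [Matrix.trace_sub, Matrix.trace_smul, Matrix.trace_one, smul_smul, smul_eq_mul]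
    rw [hpot, htrS]
    have hd' : (d : ℂ) ≠ 0 := Nat.cast_ne_zero.mpr hd.ne'
    rw [hc]
    simp only [Matrix.smul_mul, Matrix.mul_smul, Matrix.one_mul, Matrix.trace_smul,
      Matrix.trace_one, smul_eq_mul, smul_smul, Fintype.card_fin]
    push_cast
    field_simp
    ring
  have hT0 : T = 0 := eq_zero_of_trace_conjTranspose_mul_self T htrT
  have := sub_eq_zero.mp hT0
  exact this
end

section
/- Every 2-design with d² elements is a SIC-POVM: if unit vectors φ_1,...,φ_{d²} in ℂ^d satisfy Σ_{j,k} |⟨φ_j|φ_k⟩|² = d³ and Σ_{j,k} |⟨φ_j|φ_k⟩|⁴ = 2d³/(d+1), then |⟨φ_j|φ_k⟩|² = 1/(d+1) for all j ≠ k. -/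
/-!
Write `x j k = |⟨φ_j|φ_k⟩|²` and `c = 1/(d+1)`. Since `x j j = 1`, expanding the square gives
`∑_{j ≠ k} (x j k - c)² = ∑ x² - 2c ∑ x + d⁴c² - d²(1-c)²`, and the two frame potentials make the
right-hand side vanish. A vanishing sum of squares forces `x j k = c` off the diagonal.
-/

open Matrix BigOperators Finset

section OffDiag

variable {ι : Type*} [Fintype ι]

theorem sum_offDiag_sub_sq_of_diag_eq_one [DecidableEq ι] (x : ι → ι → ℝ) (c : ℝ) (hdiag : ∀ j, x j j = 1) :
    ∑ p ∈ univ.offDiag, (x p.1 p.2 - c) ^ 2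
      = ∑ j, ∑ k, x j k ^ 2 - 2 * c * ∑ j, ∑ k, x j k
        + (Fintype.card ι : ℝ) ^ 2 * c ^ 2 - Fintype.card ι * (1 - c) ^ 2 := by
  have hsplit : ∑ j, ∑ k, (x j k - c) ^ 2
      = Fintype.card ι * (1 - c) ^ 2 + ∑ p ∈ univ.offDiag, (x p.1 p.2 - c) ^ 2 := by
    rw [← sum_product' univ univ (fun j k => (x j k - c) ^ 2), ← diag_union_offDiag,
      sum_union (disjoint_diag_offDiag _), sum_diag]
    simp [hdiag]
  have hexpand : ∑ j, ∑ k, (x j k - c) ^ 2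
      = ∑ j, ∑ k, x j k ^ 2 - 2 * c * ∑ j, ∑ k, x j k
        + (Fintype.card ι : ℝ) ^ 2 * c ^ 2 := by
    simp only [sub_sq, sum_add_distrib, sum_sub_distrib, ← sum_mul, ← mul_sum, sum_const,
      card_univ, nsmul_eq_mul]
    ring
  linarith

theorem eq_of_sum_offDiag_sub_sq_eq_zero {x : ι → ι → ℝ} {c : ℝ}
    (h : ∑ p ∈ univ.offDiag, (x p.1 p.2 - c) ^ 2 = 0) {j k : ι} (hjk : j ≠ k) : x j k = c := by
  have hsq := (sum_eq_zero_iff_of_nonneg fun p _ => sq_nonneg (x p.1 p.2 - c)).1 h (j, k)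
    (by simpa using hjk)
  exact sub_eq_zero.1 (pow_eq_zero_iff two_ne_zero |>.1 hsq)

end OffDiag

theorem two_design_is_sic_general (d : ℕ)
    (φ : Fin (d^2) → Fin d → ℂ)
    (hunit : ∀ k, star (φ k) ⬝ᵥ φ k = 1)
    (hpot1 : (∑ j, ∑ k, ‖star (φ j) ⬝ᵥ φ k‖^2 : ℝ) = (d : ℝ)^3)
    (hpot2 : (∑ j, ∑ k, ‖star (φ j) ⬝ᵥ φ k‖^4 : ℝ)
      = 2 * (d : ℝ)^3 / (d + 1)) :
    ∀ j k, j ≠ k → ‖star (φ j) ⬝ᵥ φ k‖^2 = 1 / (d + 1) := by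
  set x : Fin (d^2) → Fin (d^2) → ℝ := fun j k => ‖star (φ j) ⬝ᵥ φ k‖^2
  have hdiag : ∀ j, x j j = 1 := fun j => by simp [x, hunit j]
  have hpot2' : ∑ j, ∑ k, x j k ^ 2 = 2 * (d : ℝ)^3 / (d + 1) := by
    simp only [x, ← pow_mul]
    exact hpot2
  have hzero : ∑ p ∈ univ.offDiag, (x p.1 p.2 - 1 / (d + 1)) ^ 2 = 0 := by
    rw [sum_offDiag_sub_sq_of_diag_eq_one x _ hdiag, hpot2', hpot1, Fintype.card_fin]
    push_cast
    field_simp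
    ring
  exact fun j k hjk => eq_of_sum_offDiag_sub_sq_eq_zero hzero hjk

/-- every 2-design with d² elements is a SIC-POVM: if the first and
second frame potentials attain the values d³ and 2d³/(d+1), then
|⟨φ_j|φ_k⟩|² = 1/(d+1) for all j ≠ k. -/
theorem two_design_is_sic (d : ℕ) (hd : 1 ≤ d)
    (φ : Fin (d^2) → Fin d → ℂ)
    (hunit : ∀ k, star (φ k) ⬝ᵥ φ k = 1)
    (hpot1 : (∑ j, ∑ k, ‖star (φ j) ⬝ᵥ φ k‖^2 : ℝ) = (d : ℝ)^3)
    (hpot2 : (∑ j, ∑ k, ‖star (φ j) ⬝ᵥ φ k‖^4 : ℝ)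
      = 2 * (d : ℝ)^3 / (d + 1)) :
    ∀ j k, j ≠ k → ‖star (φ j) ⬝ᵥ φ k‖^2 = 1 / (d + 1) :=
  two_design_is_sic_general d φ hunit hpot1 hpot2
end

section
/- For any n unit vectors φ_1,...,φ_n in ℂ^d and any t ≥ 1, Σ_{j,k} |⟨φ_j|φ_k⟩|^{2t} ≥ n² · t!·(d−1)!/(t+d−1)!. -/
/-!
Lift each `φ k` to its symmetric tensor power `φ k ^ ⊗t`, written in an orthonormal basis of the
symmetric subspace indexed by `Sym (Fin d) t`; inner products become `⟨φ j, φ k⟩ ^ t`. For any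
family of vectors in a space of dimension `D`, the Gram matrix `Aᴴ A` and the frame operator `A Aᴴ`
have the same Frobenius norm and the same trace, and Cauchy–Schwarz on the diagonal of `A Aᴴ`
gives `|tr|² ≤ D ‖A Aᴴ‖²`. For unit vectors the trace is `n`, and
`D = binom(t + d - 1, t) = (t + d - 1)! / (t! (d - 1)!)`.
-/

open Matrix BigOperators Finset

namespace Matrix

variable {𝕜 m n : Type*} [RCLike 𝕜] [Fintype m] [Fintype n]

theorem trace_mul_conjTranspose_self_eq_sum_norm_sq (A : Matrix m n 𝕜) :
    (A * Aᴴ).trace = ((∑ i, ∑ j, ‖A i j‖ ^ 2 : ℝ) : 𝕜) := by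
  simp [trace, mul_apply, RCLike.mul_conj]

theorem sum_norm_sq_conjTranspose_mul_self (A : Matrix m n 𝕜) :
    ∑ j, ∑ k, ‖(Aᴴ * A) j k‖ ^ 2 = ∑ a, ∑ b, ‖(A * Aᴴ) a b‖ ^ 2 := by
  apply RCLike.ofReal_injective (K := 𝕜)
  rw [← trace_mul_conjTranspose_self_eq_sum_norm_sq,
    ← trace_mul_conjTranspose_self_eq_sum_norm_sq]
  simp only [conjTranspose_mul, conjTranspose_conjTranspose, Matrix.mul_assoc]
  rw [trace_mul_comm, Matrix.mul_assoc, Matrix.mul_assoc]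

theorem norm_trace_sq_le (S : Matrix n n 𝕜) :
    ‖S.trace‖ ^ 2 ≤ Fintype.card n * ∑ a, ∑ b, ‖S a b‖ ^ 2 := by
  calc ‖S.trace‖ ^ 2 ≤ (∑ a, ‖S a a‖) ^ 2 := by
        gcongr; exact norm_sum_le _ _
    _ ≤ Fintype.card n * ∑ a, ‖S a a‖ ^ 2 := sq_sum_le_card_mul_sum_sq
    _ ≤ Fintype.card n * ∑ a, ∑ b, ‖S a b‖ ^ 2 := by
        gcongr with a
        exact single_le_sum (f := fun b => ‖S a b‖ ^ 2) (fun _ _ => by positivity) (mem_univ a)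

end Matrix

section FramePotential

variable {𝕜 ι κ : Type*} [RCLike 𝕜] [Fintype ι] [Fintype κ]

def framePotential (ψ : ι → κ → 𝕜) : ℝ :=
  ∑ j, ∑ k, ‖star (ψ j) ⬝ᵥ ψ k‖ ^ 2

theorem norm_sum_dotProduct_self_sq_le_card_mul_framePotential (ψ : ι → κ → 𝕜) :
    ‖∑ k, star (ψ k) ⬝ᵥ ψ k‖ ^ 2 ≤ Fintype.card κ * framePotential ψ := by
  set A : Matrix κ ι 𝕜 := (Matrix.of ψ)ᵀ
  have hgram : Aᴴ * A = Matrix.of fun j k => star (ψ j) ⬝ᵥ ψ k := rfl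
  calc ‖∑ k, star (ψ k) ⬝ᵥ ψ k‖ ^ 2 = ‖(A * Aᴴ).trace‖ ^ 2 := by
        rw [trace_mul_comm, hgram]; rfl
    _ ≤ Fintype.card κ * ∑ a, ∑ b, ‖(A * Aᴴ) a b‖ ^ 2 := norm_trace_sq_le _
    _ = Fintype.card κ * framePotential ψ := by
        rw [← sum_norm_sq_conjTranspose_mul_self, hgram]; rfl

end FramePotential

section SymmetricPower

variable {𝕜 ι : Type*} [RCLike 𝕜] [Fintype ι] [DecidableEq ι]

/-- The coordinates of `v ^ ⊗t` in the orthonormal basis of the symmetric subspace whose vector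
for a multiset `m` of size `t` is the normalized sum of the `m.countPerms` words with content `m`. -/
noncomputable def symTensorPow (t : ℕ) (v : ι → 𝕜) (a : Sym ι t) : 𝕜 :=
  (√(a.1.countPerms : ℝ) : 𝕜) * (a.1.map v).prod

theorem star_symTensorPow_dotProduct (t : ℕ) (v w : ι → 𝕜) :
    star (symTensorPow t v) ⬝ᵥ symTensorPow t w = (star v ⬝ᵥ w) ^ t := by
  rw [dotProduct, dotProduct, Finset.sum_pow, Finset.sym_univ]
  refine Fintype.sum_congr _ _ fun a => ?_
  have hsqrt : (√(a.1.countPerms : ℝ) : 𝕜) * √(a.1.countPerms : ℝ) = a.1.countPerms := by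
    rw [← RCLike.ofReal_mul, Real.mul_self_sqrt (Nat.cast_nonneg _)]; simp
  simp only [symTensorPow, Pi.star_apply, star_mul', RCLike.star_def, RCLike.conj_ofReal,
    map_multiset_prod, Multiset.map_map]
  rw [← hsqrt, Multiset.prod_map_mul]
  simp only [Function.comp_def]
  ring

end SymmetricPower

theorem card_sym_mul_factorial_mul_factorial (α : Type*) [Fintype α] [DecidableEq α] [Nonempty α]
    (t : ℕ) :
    Fintype.card (Sym α t) * t.factorial * (Fintype.card α - 1).factorial
      = (t + Fintype.card α - 1).factorial := by
  have hα := Fintype.card_pos (α := α)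
  rw [Sym.card_sym_eq_choose, show Fintype.card α + t - 1 = t + Fintype.card α - 1 by omega,
    show Fintype.card α - 1 = t + Fintype.card α - 1 - t by omega]
  exact Nat.choose_mul_factorial_mul_factorial (by omega)

theorem t_design_frame_potential_bound_general (d n t : ℕ) (hd : 0 < d)
    (φ : Fin n → Fin d → ℂ)
    (hunit : ∀ k, star (φ k) ⬝ᵥ φ k = 1) :
    (n : ℝ)^2 * (Nat.factorial t) * (Nat.factorial (d - 1))
        / (Nat.factorial (t + d - 1))
      ≤ (∑ j, ∑ k, ‖star (φ j) ⬝ᵥ φ k‖^(2 * t) : ℝ) := by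
  have : Nonempty (Fin d) := ⟨⟨0, hd⟩⟩
  set ψ := fun k => symTensorPow t (φ k)
  have hψ : ∀ j k, star (ψ j) ⬝ᵥ ψ k = (star (φ j) ⬝ᵥ φ k) ^ t := fun j k =>
    star_symTensorPow_dotProduct t (φ j) (φ k)
  have hpotential : framePotential ψ = ∑ j, ∑ k, ‖star (φ j) ⬝ᵥ φ k‖ ^ (2 * t) := by
    simp only [framePotential, hψ, norm_pow, ← pow_mul, mul_comm t]
  have hbound : (n : ℝ) ^ 2
      ≤ Fintype.card (Sym (Fin d) t) * ∑ j, ∑ k, ‖star (φ j) ⬝ᵥ φ k‖ ^ (2 * t) := by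
    simpa only [hψ, hunit, one_pow, sum_const, card_univ, Fintype.card_fin, nsmul_eq_mul,
      mul_one, Complex.norm_natCast, hpotential]
      using norm_sum_dotProduct_self_sq_le_card_mul_framePotential ψ
  have hfact := card_sym_mul_factorial_mul_factorial (Fin d) t
  rw [Fintype.card_fin] at hfact
  rw [div_le_iff₀ (by positivity), ← hfact]
  push_cast
  calc (n : ℝ) ^ 2 * t.factorial * (d - 1).factorial
      ≤ Fintype.card (Sym (Fin d) t) * (∑ j, ∑ k, ‖star (φ j) ⬝ᵥ φ k‖ ^ (2 * t))
          * t.factorial * (d - 1).factorial := by gcongr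
    _ = _ := by ring

/-- for any n unit vectors in ℂ^d and t ≥ 1,
Σ_{j,k} |⟨φ_j|φ_k⟩|^{2t} ≥ n²·t!(d−1)!/(t+d−1)!. -/
theorem t_design_frame_potential_bound (d n t : ℕ) (hd : 0 < d) (ht : 1 ≤ t)
    (φ : Fin n → Fin d → ℂ)
    (hunit : ∀ k, star (φ k) ⬝ᵥ φ k = 1) :
    (n : ℝ)^2 * (Nat.factorial t) * (Nat.factorial (d - 1))
        / (Nat.factorial (t + d - 1))
      ≤ (∑ j, ∑ k, ‖star (φ j) ⬝ᵥ φ k‖^(2 * t) : ℝ) :=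
  t_design_frame_potential_bound_general d n t hd φ hunit
end

section
/- In dimension d = 3, for any θ ∈ [0, 2π), the vector φ_θ = (1/√2)(1, e^{iθ}, 0) is a SIC fiducial for the Weyl–Heisenberg group: |⟨φ_θ| D_{jk} |φ_θ⟩|² = 1/4 for all (j,k) ≠ (0,0), j,k ∈ {0,1,2}. -/
open Matrix BigOperators Finset

/-- The Weyl–Heisenberg displacement operator
D_{jk} = ω^{jk/2} Σ_m ω^{jm} |k⊕m⟩⟨m| on ℂ^d, with ω = exp(2πi/d) and
ω^{jk/2} = exp(πi jk/d); ⊕ is addition mod d (addition in `Fin d`). -/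
noncomputable def Disp (d : ℕ) (j k : Fin d) : Matrix (Fin d) (Fin d) ℂ :=
  Matrix.of fun a b =>
    Complex.exp (Real.pi * Complex.I * (j : ℕ) * (k : ℕ) / d) *
    Complex.exp (2 * Real.pi * Complex.I * (j : ℕ) * (b : ℕ) / d) *
    (if a = k + b then 1 else 0)

/-! `D_{jk}` sends `|m⟩` to a unimodular multiple of `|m + k⟩`. For `k ≠ 0` the shifted
support `{k, k + 1}` meets the support `{0, 1}` of `φ` in one point, so a single product
`conj φ_{m+k} · φ_m` survives and the overlap has modulus `|φ₀||φ₁| = 1/2`. For `k = 0` the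
overlap is `(1 + ω^j)/2`, and `1 + ω^j = -ω^{2j}` has modulus one because `ω^j` is a primitive
cube root of unity. -/

open Complex
open scoped Real

theorem star_dotProduct_disp_mulVec (d : ℕ) (j k : Fin d) (φ : Fin d → ℂ) :
    star φ ⬝ᵥ Disp d j k *ᵥ φ = exp (π * I * (j : ℕ) * (k : ℕ) / d) *
      ∑ b : Fin d, exp (2 * π * I * (j : ℕ) * (b : ℕ) / d) * (star (φ (k + b)) * φ b) := by
  simp only [dotProduct, mulVec, Disp, of_apply, Finset.mul_sum]
  rw [Finset.sum_comm]
  refine Finset.sum_congr rfl fun b _ => ?_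
  simp only [Pi.star_apply, RCLike.star_def, mul_ite, mul_one, mul_zero, ite_mul, zero_mul,
    sum_ite_eq', mem_univ, if_true]
  ring

theorem IsPrimitiveRoot.norm_one_add_of_three {ζ : ℂ} (hζ : IsPrimitiveRoot ζ 3) :
    ‖1 + ζ‖ = 1 := by
  have h := hζ.geom_sum_eq_zero (by norm_num)
  simp only [Finset.sum_range_succ, Finset.sum_range_zero] at h
  rw [show 1 + ζ = -ζ ^ 2 by linear_combination h, norm_neg, norm_pow,
    hζ.norm'_eq_one (by norm_num), one_pow]

theorem isPrimitiveRoot_exp_fin_three {j : Fin 3} (hj : j ≠ 0) :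
    IsPrimitiveRoot (exp (2 * π * I * (j : ℕ) / 3)) 3 := by
  rw [mul_div_assoc]
  exact_mod_cast isPrimitiveRoot_exp_of_coprime j 3 (by norm_num)
    (by fin_cases j <;> simp_all; decide)

theorem norm_star_dotProduct_disp_mulVec (d : ℕ) (j k : Fin d) (φ : Fin d → ℂ) :
    ‖star φ ⬝ᵥ Disp d j k *ᵥ φ‖ =
      ‖∑ b : Fin d, exp (2 * π * I * (j : ℕ) * (b : ℕ) / d) * (star (φ (k + b)) * φ b)‖ := by
  rw [star_dotProduct_disp_mulVec, norm_mul, norm_exp]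
  simp

theorem norm_star_dotProduct_disp_three_mulVec {a b : ℂ} (hab : ‖a‖ = ‖b‖) {j k : Fin 3}
    (hjk : (j, k) ≠ (0, 0)) :
    ‖star ![a, b, 0] ⬝ᵥ Disp 3 j k *ᵥ ![a, b, 0]‖ = ‖a‖ * ‖b‖ := by
  rw [norm_star_dotProduct_disp_mulVec]
  rcases eq_or_ne k 0 with rfl | hk
  · have hj : j ≠ 0 := by rintro rfl; exact hjk rfl
    calc _ = ‖((‖a‖ ^ 2 : ℝ) : ℂ) * (1 + exp (2 * π * I * (j : ℕ) / 3))‖ := by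
          congr 1
          simp [Fin.sum_univ_three, conj_mul', ← hab]
          ring
      _ = ‖a‖ * ‖b‖ := by
          rw [norm_mul, (isPrimitiveRoot_exp_fin_three hj).norm_one_add_of_three, hab]
          simp [sq]
  · fin_cases k
    · exact absurd rfl hk
    all_goals simp [Fin.sum_univ_three, norm_exp, mul_comm]

/-- in d = 3, for any θ the vector (1/√2)(1, e^{iθ}, 0) is a SIC
fiducial for the Weyl–Heisenberg group: |⟨φ_θ|D_{jk}φ_θ⟩|² = 1/4 for all
(j,k) ≠ (0,0). -/
theorem qutrit_sic_fiducial (θ : ℝ)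
    (φ : Fin 3 → ℂ)
    (hφ : φ = ![(((Real.sqrt 2)⁻¹ : ℝ) : ℂ),
      Complex.exp (θ * Complex.I) * (((Real.sqrt 2)⁻¹ : ℝ) : ℂ), 0]) :
    ∀ j k : Fin 3, (j, k) ≠ (0, 0) →
      (‖star φ ⬝ᵥ (Disp 3 j k).mulVec φ‖)^2 = 1 / 4 := by
  intro j k hjk
  subst hφ
  have hsq : ‖(((Real.sqrt 2)⁻¹ : ℝ) : ℂ)‖ ^ 2 = 1 / 2 := by
    rw [norm_real, Real.norm_eq_abs, sq_abs, inv_pow, Real.sq_sqrt zero_le_two, one_div]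
  rw [norm_star_dotProduct_disp_three_mulVec
      (by rw [norm_mul, norm_exp_ofReal_mul_I, one_mul]) hjk, norm_mul, norm_exp_ofReal_mul_I, one_mul, ← sq, hsq]
  norm_num
end
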